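/- arXiv:2207.03924 — 3 statements merged into one kernel-verified Lean document; each statement's English description precedes it below -/
import Mathlib

section
/- Let J be a finite index set, let G be a finite simple graph without isolated vertices, and for each j ∈ J let G_j be a finite simple graph without isolated vertices, Λ_j ⊂ [0,2] a finite set of real numbers, t'_j, t''_j ∈ ℕ with total shift t_j = t'_j + t''_j, and μ_j ∈ ℕ. Assume: (i) G_j ≼[t'_j] G and G ≼[t''_j] G_j for the standard Laplacians; (ii) every λ ∈ Λ_j is an eigenvalue of Δ_{G_j} with multiplicity at least μ_j, and μ_j > t_j; (iii) the sets Λ_j, j ∈ J, are pairwise disjoint; (iv) |V(G)| = Σ_{j∈J} (μ_j − t_j)·|Λ_j|. Then the spectrum of Δ_G as a multiset equals the disjoint multiset union ⨄_{j∈J} Λ_j^{(μ_j − t_j)}, i.e. each λ ∈ Λ_j occurs in spec(G) with multiplicity exactly μ_j − t_j and there are no other eigenvalues. -/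
/-!
If `λ` fills the positions `a + 1, …, a + μ` of the ordered spectrum of `G_j`, the two bracketings
`G_j ≼[t'] G` and `G ≼[t''] G_j` squeeze the eigenvalues of `G` in positions
`a + t' + 1, …, a + μ - t''` between `λ` and `λ`, so `λ` has multiplicity at least `μ - t' - t''`
in `spec G`. As the `Λ_j` are disjoint, `⨄ Λ_j^(μ_j - t_j)` is therefore a submultiset of `spec G`,
and the cardinality condition forces equality.
-/

open scoped Classical

noncomputable section

/-- Degree of a vertex. -/
def deg {V : Type*} [Fintype V] (G : SimpleGraph V) (u : V) : ℕ :=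
  Nat.card {v | G.Adj u v}

/-- Standard (normalised) Laplacian. -/
def stdLap {V : Type*} [Fintype V] (G : SimpleGraph V) : Matrix V V ℝ :=
  fun u v =>
    if u = v then 1
    else if G.Adj u v then -(1 / Real.sqrt ((deg G u : ℝ) * (deg G v : ℝ)))
    else 0

/-- Signless standard Laplacian. -/
def stdLapP {V : Type*} [Fintype V] (G : SimpleGraph V) : Matrix V V ℝ :=
  fun u v =>
    if u = v then 1
    else if G.Adj u v then 1 / Real.sqrt ((deg G u : ℝ) * (deg G v : ℝ))
    else 0

/-- Spectrum (multiset of eigenvalues, with algebraic multiplicity). -/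
def spec {V : Type*} [Fintype V] (G : SimpleGraph V) : Multiset ℝ :=
  (stdLap G).charpoly.roots

def specP {V : Type*} [Fintype V] (G : SimpleGraph V) : Multiset ℝ :=
  (stdLapP G).charpoly.roots

/-- `eig G k` is the k-th smallest eigenvalue (1-based). -/
def eig {V : Type*} [Fintype V] (G : SimpleGraph V) (k : ℕ) : ℝ :=
  ((spec G).sort (· ≤ ·)).getD (k - 1) 0

def eigP {V : Type*} [Fintype V] (G : SimpleGraph V) (k : ℕ) : ℝ :=
  ((specP G).sort (· ≤ ·)).getD (k - 1) 0

end

/-- `SpecLE G G' t` is the spectral preorder relation `G ≼[t] G'`. -/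
def SpecLE {V V' : Type*} [Fintype V] [Fintype V']
    (G : SimpleGraph V) (G' : SimpleGraph V') (t : ℕ) : Prop :=
  Fintype.card V ≥ Fintype.card V' - t ∧
    ∀ k, 1 ≤ k → k ≤ Fintype.card V' - t → eig G k ≤ eig G' (k + t)

open Finset in
theorem List.count_eq_card_filter_getElem_eq {α : Type*} [DecidableEq α] (l : List α) (x : α) :
    l.count x = #(univ.filter fun i : Fin l.length => l[i] = x) := by
  conv_lhs => rw [← List.ofFn_getElem (xs := l)]
  rw [← Multiset.coe_count, ← Fin.univ_val_map, Multiset.count_map]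
  simp_rw [eq_comm (a := x)]
  rfl

theorem List.le_count_of_forall_getElem_eq {α : Type*} [DecidableEq α] {l : List α} {x : α}
    {a μ : ℕ} (hlen : a + μ ≤ l.length)
    (hx : ∀ i (hi : i < l.length), a ≤ i → i < a + μ → l[i] = x) : μ ≤ l.count x := by
  have hwindow : (l.drop a).take μ = replicate μ x := by
    refine eq_replicate_iff.2 ⟨by simp; omega, fun y hy => ?_⟩
    obtain ⟨i, hi, rfl⟩ := mem_iff_getElem.1 hy
    simp only [length_take, length_drop, lt_min_iff] at hi
    simpa using hx (a + i) (by omega) (by omega) (by omega)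
  exact replicate_sublist_iff.1 (hwindow ▸ (take_sublist _ _).trans (drop_sublist _ _))

open Finset in
theorem List.Pairwise.exists_window_of_le_count {α : Type*} [LinearOrder α] {l : List α}
    (hl : l.Pairwise (· ≤ ·)) {x : α} {μ : ℕ} (h : μ ≤ l.count x) :
    ∃ a, a + μ ≤ l.length ∧ ∀ i (hi : i < l.length), a ≤ i → i < a + μ → l[i] = x := by
  rcases μ.eq_zero_or_pos with rfl | hμ
  · exact ⟨0, by simp, by omega⟩
  rw [count_eq_card_filter_getElem_eq] at h
  set S := univ.filter fun i : Fin l.length => l[i] = x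
  have hS : S.Nonempty := Finset.card_pos.1 (by omega)
  have hmin : l[S.min' hS] = x := (Finset.mem_filter.1 (S.min'_mem hS)).2
  have hmax : l[S.max' hS] = x := (Finset.mem_filter.1 (S.max'_mem hS)).2
  have hspan : #S ≤ S.max' hS + 1 - S.min' hS := by
    rw [← Fin.card_Icc]
    exact Finset.card_le_card fun i hi => Finset.mem_Icc.2 ⟨S.min'_le i hi, S.le_max' i hi⟩
  refine ⟨S.min' hS, by omega, fun i hi hlo hhi => le_antisymm ?_ ?_⟩
  · exact hmax ▸ hl.rel_get_of_le (a := ⟨i, hi⟩) (b := S.max' hS) (Fin.le_def.2 (by simp; omega))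
  · exact hmin ▸ hl.rel_get_of_le (a := S.min' hS) (b := ⟨i, hi⟩) (Fin.le_def.2 hlo)

open Function in
theorem Finset.sum_nsmul_val_le {ι α : Type*} [Fintype ι] [DecidableEq α] {s : ι → Finset α}
    (hs : Pairwise (Disjoint on s)) {n : ι → ℕ} {S : Multiset α}
    (h : ∀ i, ∀ x ∈ s i, n i ≤ S.count x) : ∑ i, n i • (s i).val ≤ S := by
  refine Multiset.le_iff_count.2 fun x => ?_
  rw [Multiset.count_sum']
  by_cases hx : ∃ i, x ∈ s i
  · obtain ⟨i, hi⟩ := hx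
    have hothers : ∀ j, j ≠ i → (n j • (s j).val).count x = 0 := fun j hji => by
      simp [disjoint_left.1 (hs hji.symm) hi]
    rw [sum_eq_single i (fun j _ => hothers j) (by simp), Multiset.count_nsmul,
      Multiset.count_eq_one_of_mem (s i).nodup hi, mul_one]
    exact h i x hi
  · simp [not_exists.1 hx]

section Spectrum

variable {U V : Type*} [Fintype U] [Fintype V]

theorem stdLap_isHermitian (G : SimpleGraph V) : (stdLap G).IsHermitian := by
  ext u v
  simp only [Matrix.conjTranspose_apply, star_trivial, stdLap, eq_comm (a := v), G.adj_comm v u,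
    mul_comm (deg G v : ℝ)]

theorem card_spec (G : SimpleGraph V) : Multiset.card (spec G) = Fintype.card V := by
  simp [spec, (stdLap_isHermitian G).roots_charpoly_eq_eigenvalues]

theorem length_sort_spec (G : SimpleGraph V) :
    ((spec G).sort (· ≤ ·)).length = Fintype.card V := by
  rw [Multiset.length_sort, card_spec]

theorem eig_succ_eq_getElem (G : SimpleGraph V) {i : ℕ} (hi : i < ((spec G).sort (· ≤ ·)).length) :
    eig G (i + 1) = ((spec G).sort (· ≤ ·))[i] :=
  List.getD_eq_getElem _ _ hi

theorem exists_eig_window_of_le_count (G : SimpleGraph V) {x : ℝ} {μ : ℕ}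
    (h : μ ≤ (spec G).count x) :
    ∃ a, a + μ ≤ Fintype.card V ∧ ∀ k, a < k → k ≤ a + μ → eig G k = x := by
  have hlen := length_sort_spec G
  rw [← Multiset.sort_eq (spec G) (· ≤ ·), Multiset.coe_count] at h
  obtain ⟨a, ha, hwin⟩ := (Multiset.pairwise_sort _ _).exists_window_of_le_count h
  refine ⟨a, hlen ▸ ha, fun k hk₁ hk₂ => ?_⟩
  obtain ⟨i, rfl⟩ : ∃ i, k = i + 1 := ⟨k - 1, by omega⟩
  rw [eig_succ_eq_getElem G (by omega)]
  exact hwin i _ (by omega) (by omega)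

theorem le_count_spec_of_eig_window (G : SimpleGraph V) {x : ℝ} {a μ : ℕ}
    (hlen : a + μ ≤ Fintype.card V) (h : ∀ k, a < k → k ≤ a + μ → eig G k = x) :
    μ ≤ (spec G).count x := by
  have hlen' := length_sort_spec G
  rw [← Multiset.sort_eq (spec G) (· ≤ ·), Multiset.coe_count]
  refine List.le_count_of_forall_getElem_eq (a := a) (by omega) fun i hi hi₁ hi₂ => ?_
  rw [← eig_succ_eq_getElem G hi]
  exact h (i + 1) (by omega) (by omega)

theorem count_spec_le_of_specLE {H : SimpleGraph U} {G : SimpleGraph V} {t' t'' μ : ℕ} {x : ℝ}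
    (h₁ : SpecLE H G t') (h₂ : SpecLE G H t'') (h : μ ≤ (spec H).count x) :
    μ - (t' + t'') ≤ (spec G).count x := by
  obtain ⟨a, ha, hwin⟩ := exists_eig_window_of_le_count H h
  rcases le_or_gt μ (t' + t'') with hμ | hμ
  · simp [Nat.sub_eq_zero_of_le hμ]
  have hcard := h₂.1
  refine le_count_spec_of_eig_window G (a := a + t') (by omega) fun k hk₁ hk₂ => le_antisymm ?_ ?_
  · calc eig G k ≤ eig H (k + t'') := h₂.2 k (by omega) (by omega)
      _ = x := hwin _ (by omega) (by omega)
  · calc x = eig H (k - t') := (hwin _ (by omega) (by omega)).symm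
      _ ≤ eig G (k - t' + t') := h₁.2 _ (by omega) (by omega)
      _ = eig G k := by rw [Nat.sub_add_cancel (by omega)]

end Spectrum

theorem stmt_3_general {J : Type*} [Fintype J] {V : Type*} [Fintype V] (G : SimpleGraph V)
    {W : J → Type*} [∀ j, Fintype (W j)] (Gf : ∀ j, SimpleGraph (W j))
    (Λ : J → Finset ℝ) (t' t'' μ : J → ℕ)
    (h1 : ∀ j, SpecLE (Gf j) G (t' j) ∧ SpecLE G (Gf j) (t'' j))
    (h2 : ∀ j, ∀ x ∈ Λ j, μ j ≤ (spec (Gf j)).count x)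
    (h3 : ∀ j j', j ≠ j' → Disjoint (Λ j) (Λ j'))
    (h4 : Fintype.card V = ∑ j, (μ j - (t' j + t'' j)) * (Λ j).card) :
    spec G = ∑ j, (μ j - (t' j + t'' j)) • (Λ j).val := by
  have hle : ∑ j, (μ j - (t' j + t'' j)) • (Λ j).val ≤ spec G :=
    Finset.sum_nsmul_val_le h3 fun j x hx => count_spec_le_of_specLE (h1 j).1 (h1 j).2 (h2 j x hx)
  refine (Multiset.eq_of_le_of_card_le hle ?_).symm
  simp [card_spec, h4, Multiset.card_sum]

/-- determination of the spectrum by bracketing with auxiliary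
graphs having eigenvalues of high multiplicity (Theorem `main.idea`). -/
theorem stmt_3 {J : Type*} [Fintype J] {V : Type*} [Fintype V] (G : SimpleGraph V)
    {W : J → Type*} [∀ j, Fintype (W j)] (Gf : ∀ j, SimpleGraph (W j))
    (Λ : J → Finset ℝ) (t' t'' μ : J → ℕ)
    (hG : ∀ v, 0 < deg G v) (hGf : ∀ j v, 0 < deg (Gf j) v)
    (hΛ : ∀ j, ∀ x ∈ Λ j, x ∈ Set.Icc (0 : ℝ) 2)
    (h1 : ∀ j, SpecLE (Gf j) G (t' j) ∧ SpecLE G (Gf j) (t'' j))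
    (h2 : ∀ j, ∀ x ∈ Λ j, μ j ≤ (spec (Gf j)).count x)
    (h2' : ∀ j, t' j + t'' j < μ j)
    (h3 : ∀ j j', j ≠ j' → Disjoint (Λ j) (Λ j'))
    (h4 : Fintype.card V = ∑ j, (μ j - (t' j + t'' j)) * (Λ j).card) :
    spec G = ∑ j, (μ j - (t' j + t'' j)) • (Λ j).val :=
  stmt_3_general G Gf Λ t' t'' μ h1 h2 h3 h4
end

section
/- Let r ≥ 2 and let K̂_r be the graph on 2r vertices obtained from the complete graph K_r by attaching a pendant edge to each of its r vertices. Then both (2r − 1 − √(4r+1))/(2r) and (2r − 1 + √(4r+1))/(2r) are eigenvalues of the signless standard Laplacian Δ_{K̂_r⁺}, each with multiplicity at least r − 1. -/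
/-! With the clique vertices first, `Δ_{K̂_r⁺}` is the block matrix
`[[(1 - 1/r) I + (1/r) J, I/√r], [I/√r, I]]` (`J` all ones), and `J x = 0` when `∑ x = 0`.
For such `x` it maps `(x, t x)` to `(a x, b x)` with `a = 1 - 1/r + t/√r`, `b = 1/√r + t`.
Taking `t = √r (μ - 1) + 1/√r` makes `a = μ`, and then `b = μ t` exactly when
`r (μ - 1)² + (μ - 1) = 1`, whose roots are the two numbers of the theorem. So each root has
an `(r - 1)`-dimensional eigenspace, and geometric multiplicity is at most the multiplicity as
a root of the characteristic polynomial. -/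

open scoped Classical

/-- `hatK r` is the complete graph `K_r` (vertices `.inl i`) with a pendant
vertex `.inr i` attached to each vertex `.inl i`. -/
def hatK (r : ℕ) : SimpleGraph (Fin r ⊕ Fin r) where
  Adj x y :=
    match x, y with
    | .inl i, .inl j => i ≠ j
    | .inl i, .inr j => i = j
    | .inr i, .inl j => i = j
    | .inr _, .inr _ => False
  symm := by
    constructor
    rintro (i | i) (j | j) h
    · exact h.symm
    · exact h.symm
    · exact h.symm
    · exact h
  loopless := by
    constructor
    rintro (i | i) h
    · exact h rfl
    · exact h

open Module Matrix

lemma Matrix.finrank_eigenspace_le_count_charpoly_roots {K n : Type*} [Field K] [Fintype n]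
    [DecidableEq n] (A : Matrix n n K) (μ : K) :
    finrank K (End.eigenspace (toLin' A) μ) ≤ A.charpoly.roots.count μ := by
  rw [Polynomial.count_roots, ← Matrix.charpoly_toLin']
  exact LinearMap.finrank_eigenspace_le _ _

lemma Module.End.finrank_le_finrank_eigenspace_of_injective {K V W : Type*} [Field K]
    [AddCommGroup V] [Module K V] [FiniteDimensional K V] [AddCommGroup W] [Module K W]
    {f : End K V} {μ : K} (L : W →ₗ[K] V) (hL : Function.Injective L)
    (hfL : ∀ w, f (L w) = μ • L w) :
    finrank K W ≤ finrank K (f.eigenspace μ) :=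
  LinearMap.finrank_le_finrank_of_injective
    (f := L.codRestrict _ fun w => End.mem_eigenspace_iff.2 (hfL w))
    fun _ _ h => hL (congrArg Subtype.val h)

lemma LinearMap.finrank_sub_one_le_finrank_ker {K V : Type*} [Field K] [AddCommGroup V]
    [Module K V] [FiniteDimensional K V] (φ : Dual K V) :
    finrank K V - 1 ≤ finrank K (ker φ) := by
  have hrange : finrank K (range φ) ≤ 1 := (Submodule.finrank_le _).trans_eq (finrank_self K)
  have := φ.finrank_range_add_finrank_ker
  omega

section hatK

variable {r : ℕ}

@[simp] lemma hatK_adj_inl_inl {i j : Fin r} : (hatK r).Adj (.inl i) (.inl j) ↔ i ≠ j := Iff.rfl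
@[simp] lemma hatK_adj_inl_inr {i j : Fin r} : (hatK r).Adj (.inl i) (.inr j) ↔ i = j := Iff.rfl
@[simp] lemma hatK_adj_inr_inl {i j : Fin r} : (hatK r).Adj (.inr i) (.inl j) ↔ i = j := Iff.rfl
@[simp] lemma hatK_not_adj_inr_inr {i j : Fin r} : ¬ (hatK r).Adj (.inr i) (.inr j) := id

lemma deg_hatK_inr (i : Fin r) : deg (hatK r) (.inr i) = 1 := by
  have hnbhd : {v | (hatK r).Adj (.inr i) v} = {.inl i} := by
    ext (j | j) <;> simp [eq_comm]
  rw [deg, Nat.card_coe_set_eq, hnbhd, Set.ncard_singleton]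

lemma deg_hatK_inl (i : Fin r) : deg (hatK r) (.inl i) = r := by
  have hnbhd : {v | (hatK r).Adj (.inl i) v} = insert (.inr i) (.inl '' {j | j ≠ i}) := by
    ext (j | j) <;> simp [eq_comm]
  have hcard : {j : Fin r | j ≠ i}.ncard = r - 1 := by
    rw [Set.ncard_eq_toFinset_card', Set.toFinset_ofPred, Finset.filter_ne',
      Finset.card_erase_of_mem (Finset.mem_univ _), Finset.card_univ, Fintype.card_fin]
  rw [deg, Nat.card_coe_set_eq, hnbhd, Set.ncard_insert_of_notMem (by simp),
    Set.ncard_image_of_injective _ Sum.inl_injective, hcard]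
  have := i.pos
  omega

lemma stdLapP_hatK :
    stdLapP (hatK r) = fromBlocks ((1 - (r : ℝ)⁻¹) • 1 + (r : ℝ)⁻¹ • of fun _ _ => 1)
      ((√r)⁻¹ • 1) ((√r)⁻¹ • 1) 1 := by
  ext (i | i) (j | j) <;> by_cases h : i = j <;>
    simp [stdLapP, h, deg_hatK_inl, deg_hatK_inr, Real.sqrt_mul_self, one_apply]

lemma stdLapP_hatK_mulVec_sumElim {x : Fin r → ℝ} (hx : ∑ i, x i = 0) (t : ℝ) :
    stdLapP (hatK r) *ᵥ Sum.elim x (t • x) =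
      Sum.elim ((1 - (r : ℝ)⁻¹ + (√r)⁻¹ * t) • x) (((√r)⁻¹ + t) • x) := by
  have hJ : (of fun _ _ => (1 : ℝ) : Matrix (Fin r) (Fin r) ℝ) *ᵥ x = 0 := by
    ext i
    simp [mulVec, dotProduct, hx]
  rw [stdLapP_hatK, fromBlocks_mulVec]
  simp only [Function.comp_def, Sum.elim_inl, Sum.elim_inr, add_mulVec, smul_mulVec, one_mulVec, hJ]
  congr 1 <;> module

lemma stdLapP_hatK_mulVec_eq_smul (hr : 0 < r) {μ : ℝ} (hμ : r * (μ - 1) ^ 2 + (μ - 1) = 1)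
    {x : Fin r → ℝ} (hx : ∑ i, x i = 0) :
    stdLapP (hatK r) *ᵥ Sum.elim x ((√r * (μ - 1) + (√r)⁻¹) • x) =
      μ • Sum.elim x ((√r * (μ - 1) + (√r)⁻¹) • x) := by
  have hss : √r ^ 2 = r := Real.sq_sqrt (Nat.cast_nonneg r)
  have hinl : 1 - (r : ℝ)⁻¹ + (√r)⁻¹ * (√r * (μ - 1) + (√r)⁻¹) = μ := by
    field_simp
    linear_combination -hss
  have hinr : (√r)⁻¹ + (√r * (μ - 1) + (√r)⁻¹) = μ * (√r * (μ - 1) + (√r)⁻¹) := by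
    field_simp
    linear_combination -hμ - (μ - 1) ^ 2 * hss
  rw [stdLapP_hatK_mulVec_sumElim hx, hinl, hinr, ← smul_smul]
  ext (i | i) <;> rfl

lemma le_count_specP_hatK (hr : 0 < r) {μ : ℝ} (hμ : r * (μ - 1) ^ 2 + (μ - 1) = 1) :
    r - 1 ≤ (specP (hatK r)).count μ := by
  let t := √r * (μ - 1) + (√r)⁻¹
  let sum : Dual ℝ (Fin r → ℝ) := Fintype.linearCombination ℝ fun _ => 1
  let L : (Fin r → ℝ) →ₗ[ℝ] (Fin r ⊕ Fin r → ℝ) :=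
    (LinearEquiv.sumArrowLequivProdArrow _ _ ℝ ℝ).symm.toLinearMap ∘ₗ
      LinearMap.prod LinearMap.id (t • LinearMap.id)
  have hL : Function.Injective (L ∘ₗ (LinearMap.ker sum).subtype) :=
    fun x y h => Subtype.ext (funext fun i => congrFun h (.inl i))
  have hLeigen (x : LinearMap.ker sum) : toLin' (stdLapP (hatK r)) (L x) = μ • L x := by
    have hx := LinearMap.mem_ker.1 x.2
    simp only [sum, Fintype.linearCombination_apply, smul_eq_mul, mul_one] at hx
    exact stdLapP_hatK_mulVec_eq_smul hr hμ hx
  calc r - 1 = finrank ℝ (Fin r → ℝ) - 1 := by rw [Module.finrank_fin_fun]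
    _ ≤ finrank ℝ (LinearMap.ker sum) := LinearMap.finrank_sub_one_le_finrank_ker sum
    _ ≤ finrank ℝ (End.eigenspace (toLin' (stdLapP (hatK r))) μ) :=
      End.finrank_le_finrank_eigenspace_of_injective _ hL hLeigen
    _ ≤ (specP (hatK r)).count μ :=
      (finrank_eigenspace_le_count_charpoly_roots _ μ).trans_eq (by unfold specP; congr)

end hatK

/-- the numbers `(2r-1∓√(4r+1))/(2r)` are eigenvalues of the
signless standard Laplacian of `K̂_r`, each with multiplicity at least `r-1`. -/
theorem stmt_7 (r : ℕ) (hr : 2 ≤ r) :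
    r - 1 ≤ (specP (hatK r)).count
        ((2 * (r : ℝ) - 1 - Real.sqrt (4 * (r : ℝ) + 1)) / (2 * (r : ℝ))) ∧
    r - 1 ≤ (specP (hatK r)).count
        ((2 * (r : ℝ) - 1 + Real.sqrt (4 * (r : ℝ) + 1)) / (2 * (r : ℝ))) := by
  have hr0 : (r : ℝ) ≠ 0 := Nat.cast_ne_zero.2 (by omega)
  have hdiscrim : discrim (r : ℝ) (-(2 * r - 1)) (r - 2) = √(4 * r + 1) * √(4 * r + 1) := by
    rw [Real.mul_self_sqrt (by positivity), discrim]
    ring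
  have hquad := quadratic_eq_zero_iff hr0 hdiscrim
  simp only [neg_neg] at hquad
  have hshift (μ : ℝ) (hμ : r * (μ * μ) + -(2 * r - 1) * μ + (r - 2) = 0) :
      r * (μ - 1) ^ 2 + (μ - 1) = 1 := by
    linear_combination hμ
  exact ⟨le_count_specP_hatK (by omega) (hshift _ ((hquad _).2 (.inr rfl))),
    le_count_specP_hatK (by omega) (hshift _ ((hquad _).2 (.inl rfl)))⟩
end

section
/- Let p ≥ 1, r ≥ 4, and let A = (a_1,…,a_s) and B = (b_1,…,b_s) be two s-partitions of r (2 ≤ s ≤ r−1) that are different as multisets. Then the fuzzy complete bipartite graphs K̂_{p,r}(A) and K̂_{p,r}(B) are isospectral for the standard Laplacian—the multisets of eigenvalues of Δ_{K̂_{p,r}(A)} and Δ_{K̂_{p,r}(B)} coincide—and the two graphs are not isomorphic as simple graphs. -/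
open scoped Classical

/-- The fuzzy complete bipartite graph `K̂_{p,r}(A)`: the vertices
`.inl i` (`i : Fin p`) are adjacent to all vertices `.inr (.inl i')`
(`i' : Fin r`), and the vertex `.inr (.inr j)` (`j : Fin s`) is adjacent
exactly to the `A j` vertices `.inr (.inl i')` with
`a_1 + ⋯ + a_{j-1} ≤ i' < a_1 + ⋯ + a_j` (0-based). -/
def fuzzyBip (p r s : ℕ) (A : Fin s → ℕ) : SimpleGraph (Fin p ⊕ Fin r ⊕ Fin s) where
  Adj x y :=
    match x, y with
    | .inl _, .inr (.inl _) => True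
    | .inr (.inl _), .inl _ => True
    | .inr (.inl i), .inr (.inr j) =>
        (∑ k ∈ Finset.Iio j, A k) ≤ (i : ℕ) ∧ (i : ℕ) < ∑ k ∈ Finset.Iic j, A k
    | .inr (.inr j), .inr (.inl i) =>
        (∑ k ∈ Finset.Iio j, A k) ≤ (i : ℕ) ∧ (i : ℕ) < ∑ k ∈ Finset.Iic j, A k
    | _, _ => False
  symm := by
    constructor
    rintro (i | i | i) (j | j | j) h <;> exact h
  loopless := by
    constructor
    rintro (i | i | i) h <;> exact h

/-!
The degree multiset of `K̂_{p,r}(A)` consists of `p` copies of `r`, `r` copies of `p + 1` and the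
parts of `A`, so it determines `A` and `K̂_{p,r}(A) ≇ K̂_{p,r}(B)`.

For isospectrality, write the Laplacian in block form: besides the identity, its only nonzero
blocks are the constant `x`–`u` block and `-(p+1)^{-1/2} V_A` between the `u`s and the `w`s,
where `V_A i j = a_j^{-1/2}` if `u_i` belongs to the `j`-th block. The columns of `V_A` are
orthonormal and `V_A (√a_j)_j = 𝟙`. Since `(√a_j)_j` and `(√b_j)_j` both have norm `√r`, there
are orthogonal matrices `Q` with `Q (√a_j)_j = (√b_j)_j` and `P` with `P V_A = V_B Q`. Then
`P 𝟙 = V_B Q (√a_j)_j = 𝟙`, and `diag(1, P, Q)` conjugates the Laplacian of `K̂_{p,r}(A)` into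
that of `K̂_{p,r}(B)`.
-/

open Finset Matrix

namespace Matrix

section Orthogonal

variable {m n : Type*} [Fintype m] [DecidableEq n]

lemma orthonormal_toLp_transpose {M : Matrix m n ℝ} (hM : Mᵀ * M = 1) :
    Orthonormal ℝ fun j => WithLp.toLp 2 (Mᵀ j) := by
  rw [orthonormal_iff_ite]
  intro j k
  rw [← one_apply, ← hM, mul_apply]
  simp [PiLp.inner_apply, mul_comm]

variable [DecidableEq m]

lemma exists_orthogonal_submatrix_eq (M : Matrix m n ℝ) (hM : Mᵀ * M = 1) (e : n ↪ m) :
    ∃ U : Matrix m m ℝ, Uᵀ * U = 1 ∧ U.submatrix id e = M := by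
  have hv : Orthonormal ℝ ((Set.range e).domRestrict
      (Function.extend e (fun j => WithLp.toLp 2 (Mᵀ j)) 0)) := by
    convert (orthonormal_toLp_transpose hM).comp _
      (Equiv.ofInjective e e.injective).symm.injective
    ext1 ⟨_, j, rfl⟩
    simp [e.injective.extend_apply]
  obtain ⟨b, hb⟩ := hv.exists_orthonormalBasis_extension_of_card_eq (by simp)
  refine ⟨(EuclideanSpace.basisFun m ℝ).toBasis.toMatrix b, ?_, ?_⟩
  · simpa [conjTranspose_eq_transpose_of_trivial] using
      (EuclideanSpace.basisFun m ℝ).toMatrix_orthonormalBasis_conjTranspose_mul_self b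
  · ext i j
    rw [submatrix_apply, Module.Basis.toMatrix_apply, OrthonormalBasis.coe_toBasis_repr_apply,
      EuclideanSpace.basisFun_repr, id, hb (e j) ⟨j, rfl⟩, e.injective.extend_apply]
    rfl

variable [Fintype n]

lemma exists_orthogonal_mul_eq (M N : Matrix m n ℝ) (hM : Mᵀ * M = 1) (hN : Nᵀ * N = 1) :
    ∃ P : Matrix m m ℝ, Pᵀ * P = 1 ∧ P * M = N := by
  obtain ⟨e⟩ : Nonempty (n ↪ m) := Function.Embedding.nonempty_of_card_le <| by
    simpa using (orthonormal_toLp_transpose hM).linearIndependent.fintype_card_le_finrank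
  obtain ⟨U, hU, rfl⟩ := exists_orthogonal_submatrix_eq M hM e
  obtain ⟨W, hW, rfl⟩ := exists_orthogonal_submatrix_eq N hN e
  refine ⟨W * Uᵀ, ?_, ?_⟩
  · rw [transpose_mul, transpose_transpose, Matrix.mul_assoc, ← Matrix.mul_assoc Wᵀ, hW,
      Matrix.one_mul, mul_eq_one_comm.1 hU]
  · rw [← submatrix_id_id (W * Uᵀ), ← submatrix_mul _ _ _ _ _ Function.bijective_id,
      Matrix.mul_assoc, hU, Matrix.mul_one]

lemma exists_orthogonal_mulVec_eq {v w : m → ℝ} (h : v ⬝ᵥ v = w ⬝ᵥ w) :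
    ∃ Q : Matrix m m ℝ, Qᵀ * Q = 1 ∧ Q *ᵥ v = w := by
  by_cases hv : v = 0
  · rw [hv, zero_dotProduct, eq_comm, dotProduct_self_eq_zero] at h
    exact ⟨1, by simp, by simp [hv, h]⟩
  have hv2 : 0 ≤ v ⬝ᵥ v := sum_nonneg fun i _ => mul_self_nonneg (v i)
  set c := √(v ⬝ᵥ v)
  have hc : c ≠ 0 :=
    Real.sqrt_ne_zero'.2 <| hv2.lt_of_ne (Ne.symm (dotProduct_self_eq_zero.not.2 hv))
  have hc2 : v ⬝ᵥ v = c ^ 2 := (Real.sq_sqrt hv2).symm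
  -- `c⁻¹ • v` and `c⁻¹ • w` are unit vectors, i.e. one-column matrices with orthonormal columns
  have hcol : ∀ u : m → ℝ, u ⬝ᵥ u = c ^ 2 →
      (replicateCol Unit (c⁻¹ • u))ᵀ * replicateCol Unit (c⁻¹ • u) = 1 := by
    intro u hu
    ext
    simp only [replicateCol_smul, transpose_smul, transpose_replicateCol, Matrix.mul_smul,
      smul_mul, smul_apply, replicateRow_mul_replicateCol_apply, hu, smul_eq_mul, one_apply_eq]
    field_simp
  obtain ⟨Q, hQ, hQvw⟩ := exists_orthogonal_mul_eq _ _ (hcol v hc2) (hcol w (h ▸ hc2))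
  refine ⟨Q, hQ, smul_right_injective _ (inv_ne_zero hc) (replicateCol_injective (ι := Unit) ?_)⟩
  beta_reduce
  rw [← mulVec_smul, replicateCol_mulVec, hQvw]

end Orthogonal

lemma mul_transpose_eq_of_mul_eq {m n : Type*} [Fintype m] [Fintype n] [DecidableEq m]
    [DecidableEq n] {P : Matrix m m ℝ} {Q : Matrix n n ℝ} {V W : Matrix m n ℝ}
    (hP : Pᵀ * P = 1) (hQ : Qᵀ * Q = 1) (h : P * V = W * Q) : Q * Vᵀ = Wᵀ * P := by
  have hV : V = Pᵀ * W * Q := by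
    rw [Matrix.mul_assoc, ← h, ← Matrix.mul_assoc, hP, Matrix.one_mul]
  rw [hV, transpose_mul, transpose_mul, transpose_transpose, ← Matrix.mul_assoc,
    ← Matrix.mul_assoc, mul_eq_one_comm.1 hQ, Matrix.one_mul]

lemma charpoly_eq_of_mul_eq_mul {n R : Type*} [Fintype n] [DecidableEq n] [CommRing R]
    {A B O O' : Matrix n n R} (hO : O' * O = 1) (h : O * A = B * O) :
    A.charpoly = B.charpoly :=
  calc A.charpoly = (O' * B * O).charpoly := by
        rw [Matrix.mul_assoc, ← h, ← Matrix.mul_assoc, hO, Matrix.one_mul]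
    _ = (O * O' * B).charpoly := by rw [charpoly_mul_comm, Matrix.mul_assoc]
    _ = B.charpoly := by rw [mul_eq_one_comm.1 hO, Matrix.one_mul]

end Matrix

section LapBlocks

variable {l m n : Type*} [Fintype l] [Fintype m] [Fintype n]
  [DecidableEq l] [DecidableEq m] [DecidableEq n]

/-- The normalised Laplacian of a graph on `l ⊕ m ⊕ n` whose edges run between `l` and `m`
with normalised weights `J` and between `m` and `n` with normalised weights `V`. -/
def lapBlocks (J : Matrix l m ℝ) (V : Matrix m n ℝ) : Matrix (l ⊕ m ⊕ n) (l ⊕ m ⊕ n) ℝ :=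
  fromBlocks 1 (-fromCols J 0) (-fromRows Jᵀ 0) (fromBlocks 1 (-V) (-Vᵀ) 1)

lemma fromBlocks_mul_lapBlocks {J : Matrix l m ℝ} {V W : Matrix m n ℝ} {P : Matrix m m ℝ}
    {Q : Matrix n n ℝ} (hJP : J * P = J) (hPJ : P * Jᵀ = Jᵀ) (hPV : P * V = W * Q)
    (hQV : Q * Vᵀ = Wᵀ * P) :
    fromBlocks 1 0 0 (fromBlocks P 0 0 Q) * lapBlocks J V =
      lapBlocks J W * fromBlocks 1 0 0 (fromBlocks P 0 0 Q) := by
  simp [lapBlocks, fromBlocks_multiply, fromCols_mul_fromBlocks, fromBlocks_mul_fromRows,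
    hJP, hPJ, hPV, hQV]

end LapBlocks

lemma deg_eq_degree {V : Type*} [Fintype V] (G : SimpleGraph V) (u : V) :
    deg G u = G.degree u := by
  rw [deg, ← SimpleGraph.card_neighborSet_eq_degree, Nat.card_eq_fintype_card]
  rfl

lemma SimpleGraph.Iso.map_degree_univ {V W : Type*} [Fintype V] [Fintype W]
    {G : SimpleGraph V} {H : SimpleGraph W} [DecidableRel G.Adj] [DecidableRel H.Adj]
    (e : G ≃g H) : univ.val.map (fun w => H.degree w) = univ.val.map (fun v => G.degree v) := by
  rw [← Multiset.map_univ_val_equiv e.toEquiv, Multiset.map_map]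
  exact Multiset.map_congr rfl fun v _ => e.degree_eq v

lemma spec_eq_of_mul_eq_mul {V : Type*} [Fintype V] [DecidableEq V] {G H : SimpleGraph V}
    {O O' : Matrix V V ℝ} (hO : O' * O = 1) (h : O * stdLap G = stdLap H * O) :
    spec G = spec H := by
  unfold spec
  -- `spec` takes the characteristic polynomial with respect to the classical `DecidableEq V`
  rw [Subsingleton.elim (fun a b => Classical.propDecidable (a = b)) ‹DecidableEq V›,
    charpoly_eq_of_mul_eq_mul hO h]

section Blocks

variable {s : ℕ} (X : Fin s → ℕ)

def InBlock (i : ℕ) (j : Fin s) : Prop :=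
  ∑ k ∈ Iio j, X k ≤ i ∧ i < ∑ k ∈ Iic j, X k

instance (i : ℕ) (j : Fin s) : Decidable (InBlock X i j) := inferInstanceAs (Decidable (_ ∧ _))

variable {X}

lemma InBlock.unique {i : ℕ} {j j' : Fin s} (h : InBlock X i j) (h' : InBlock X i j') :
    j = j' := by
  have key : ∀ {a b : Fin s}, a < b → ∑ k ∈ Iic a, X k ≤ ∑ k ∈ Iio b, X k := fun hab =>
    sum_le_sum_of_subset fun k hk => mem_Iio.2 ((mem_Iic.1 hk).trans_lt hab)
  unfold InBlock at h h'
  rcases lt_trichotomy j j' with hlt | heq | hgt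
  · exact absurd (key hlt) (by omega)
  · exact heq
  · exact absurd (key hgt) (by omega)

lemma card_inBlock {r : ℕ} (hX : ∑ k, X k = r) (j : Fin s) :
    #{i : Fin r | InBlock X i j} = X j := by
  have hle : ∑ k ∈ Iic j, X k ≤ r := hX ▸ sum_le_sum_of_subset (subset_univ _)
  have hIco : ({i : Fin r | InBlock X i j} : Finset _).map Fin.valEmbedding
      = Ico (∑ k ∈ Iio j, X k) (∑ k ∈ Iic j, X k) := by
    ext n
    simp only [mem_map, mem_filter, mem_univ, true_and, Fin.valEmbedding_apply, mem_Ico]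
    exact ⟨by rintro ⟨i, hi, rfl⟩; exact hi, fun hn => ⟨⟨n, by omega⟩, hn, rfl⟩⟩
  rw [← card_map, hIco, Nat.card_Ico, ← sum_Iio_add_eq_sum_Iic]
  omega

lemma existsUnique_inBlock {r : ℕ} (hX : ∑ k, X k = r) (i : Fin r) :
    ∃! j, InBlock X i j := by
  -- the blocks are disjoint and their sizes add up to `r`, so they cover `Fin r`
  have hcover : univ.biUnion (fun j => ({i : Fin r | InBlock X i j} : Finset _)) = univ := by
    refine eq_univ_of_card _ ?_
    rw [card_biUnion fun j _ j' _ hne => disjoint_filter.2 fun i _ h h' => hne (h.unique h'),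
      Fintype.card_fin]
    simp only [card_inBlock hX, hX]
  obtain ⟨j, -, hj⟩ := mem_biUnion.1 (hcover ▸ mem_univ i)
  exact ⟨j, (mem_filter.1 hj).2, fun j' hj' => hj'.unique (mem_filter.1 hj).2⟩

end Blocks

namespace FuzzyBip

variable {p r s : ℕ} {X A B : Fin s → ℕ}

lemma adj_inr_inl_inr_inr (i : Fin r) (j : Fin s) :
    (fuzzyBip p r s X).Adj (.inr (.inl i)) (.inr (.inr j)) ↔ InBlock X i j := Iff.rfl

lemma adj_inr_inr_inr_inl (i : Fin r) (j : Fin s) :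
    (fuzzyBip p r s X).Adj (.inr (.inr j)) (.inr (.inl i)) ↔ InBlock X i j := Iff.rfl

lemma degree_inl (i : Fin p) : (fuzzyBip p r s X).degree (.inl i) = r := by
  rw [← Nat.cast_id ((fuzzyBip p r s X).degree _), SimpleGraph.degree_eq_sum_if_adj,
    Fintype.sum_sum_type, Fintype.sum_sum_type]
  simp [fuzzyBip]

lemma degree_inr_inl (hX : ∑ k, X k = r) (i : Fin r) :
    (fuzzyBip p r s X).degree (.inr (.inl i)) = p + 1 := by
  rw [← Nat.cast_id ((fuzzyBip p r s X).degree _), SimpleGraph.degree_eq_sum_if_adj,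
    Fintype.sum_sum_type, Fintype.sum_sum_type]
  obtain ⟨j, hj, hj'⟩ := existsUnique_inBlock hX i
  simp only [adj_inr_inl_inr_inr]
  rw [Fintype.sum_eq_single j fun j' hne => if_neg fun h => hne (hj' j' h), if_pos hj]
  simp [fuzzyBip]

lemma degree_inr_inr (hX : ∑ k, X k = r) (j : Fin s) :
    (fuzzyBip p r s X).degree (.inr (.inr j)) = X j := by
  rw [← Nat.cast_id ((fuzzyBip p r s X).degree _), SimpleGraph.degree_eq_sum_if_adj,
    Fintype.sum_sum_type, Fintype.sum_sum_type]
  simp only [SimpleGraph.adj_comm _ (Sum.inr (Sum.inr j) : Fin p ⊕ Fin r ⊕ Fin s),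
    adj_inr_inl_inr_inr]
  simp [fuzzyBip, card_inBlock hX]

lemma map_degree_univ (hX : ∑ k, X k = r) :
    univ.val.map (fun v => (fuzzyBip p r s X).degree v) =
      Multiset.replicate p r + (Multiset.replicate r (p + 1) + univ.val.map X) := by
  have huniv : (univ : Finset (Fin p ⊕ Fin r ⊕ Fin s)).val =
      univ.val.map Sum.inl + (univ.val.map Sum.inl + univ.val.map Sum.inr).map Sum.inr := rfl
  simp only [huniv, Multiset.map_add, Multiset.map_map, Function.comp_def, degree_inl,
    degree_inr_inl hX, degree_inr_inr hX, Multiset.map_const', card_val, card_univ,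
    Fintype.card_fin]

theorem isEmpty_iso (hA : ∑ k, A k = r) (hB : ∑ k, B k = r)
    (hAB : univ.val.map A ≠ univ.val.map B) :
    IsEmpty (fuzzyBip p r s A ≃g fuzzyBip p r s B) := by
  refine ⟨fun e => hAB ?_⟩
  have h := SimpleGraph.Iso.map_degree_univ e
  rw [map_degree_univ hA, map_degree_univ hB] at h
  exact (add_left_cancel (add_left_cancel h)).symm

variable (r X) in
noncomputable def blockIncidence : Matrix (Fin r) (Fin s) ℝ :=
  of fun i j => if InBlock X i j then (√(X j))⁻¹ else 0

lemma blockIncidence_transpose_mul_self (hX0 : ∀ j, 0 < X j) (hX : ∑ k, X k = r) :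
    (blockIncidence r X)ᵀ * blockIncidence r X = 1 := by
  ext j j'
  simp only [mul_apply, transpose_apply, blockIncidence, of_apply, ite_mul, mul_ite, zero_mul,
    mul_zero]
  rcases eq_or_ne j j' with rfl | hne
  · have hXj : (X j : ℝ) ≠ 0 := by exact_mod_cast (hX0 j).ne'
    simp [sum_ite, filter_filter, card_inBlock hX, ← mul_inv, hXj]
  · rw [one_apply_ne hne]
    exact sum_eq_zero fun i _ => by
      split_ifs with h h' <;> first | rfl | exact absurd (h'.unique h) hne

lemma blockIncidence_mulVec_sqrt (hX0 : ∀ j, 0 < X j) (hX : ∑ k, X k = r) :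
    blockIncidence r X *ᵥ (fun j => √(X j)) = 1 := by
  ext i
  obtain ⟨j, hj, hj'⟩ := existsUnique_inBlock hX i
  have hXj : √(X j : ℝ) ≠ 0 := by have := hX0 j; positivity
  rw [mulVec, dotProduct, Fintype.sum_eq_single j fun j' hne => by
    simp only [blockIncidence, of_apply, if_neg fun h => hne (hj' j' h), zero_mul]]
  simp [blockIncidence, hj, hXj]

lemma stdLap_fuzzyBip (hX : ∑ k, X k = r) :
    stdLap (fuzzyBip p r s X) =
      lapBlocks (vecMulVec (fun _ => (√(r * (p + 1) : ℝ))⁻¹) 1)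
        ((√(p + 1 : ℝ))⁻¹ • blockIncidence r X) := by
  ext (i | i | j) (i' | i' | j')
  all_goals
    simp only [stdLap, deg_eq_degree, degree_inl, degree_inr_inl hX, degree_inr_inr hX,
      adj_inr_inl_inr_inr, adj_inr_inr_inr_inl]
    simp [lapBlocks, fuzzyBip, blockIncidence, vecMulVec, one_apply, mul_comm, neg_ite]

lemma exists_orthogonal_intertwining (hA0 : ∀ j, 0 < A j) (hB0 : ∀ j, 0 < B j)
    (hA : ∑ k, A k = r) (hB : ∑ k, B k = r) :
    ∃ (P : Matrix (Fin r) (Fin r) ℝ) (Q : Matrix (Fin s) (Fin s) ℝ), Pᵀ * P = 1 ∧ Qᵀ * Q = 1 ∧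
      P * blockIncidence r A = blockIncidence r B * Q ∧ P *ᵥ 1 = 1 := by
  have hnorm {X : Fin s → ℕ} (hX : ∑ k, X k = r) :
      (fun j => √(X j : ℝ)) ⬝ᵥ (fun j => √(X j : ℝ)) = r := by
    simp [dotProduct, ← hX]
  obtain ⟨Q, hQ, hQAB⟩ := exists_orthogonal_mulVec_eq ((hnorm hA).trans (hnorm hB).symm)
  have hBQ : (blockIncidence r B * Q)ᵀ * (blockIncidence r B * Q) = 1 := by
    rw [transpose_mul, Matrix.mul_assoc, ← Matrix.mul_assoc (blockIncidence r B)ᵀ,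
      blockIncidence_transpose_mul_self hB0 hB, Matrix.one_mul, hQ]
  obtain ⟨P, hP, hPAB⟩ := exists_orthogonal_mul_eq _ _
    (blockIncidence_transpose_mul_self hA0 hA) hBQ
  refine ⟨P, Q, hP, hQ, hPAB, ?_⟩
  calc P *ᵥ 1 = P *ᵥ (blockIncidence r A *ᵥ fun j => √(A j : ℝ)) := by
        rw [blockIncidence_mulVec_sqrt hA0 hA]
    _ = blockIncidence r B *ᵥ (Q *ᵥ fun j => √(A j : ℝ)) := by
        rw [mulVec_mulVec, hPAB, mulVec_mulVec]
    _ = 1 := by rw [hQAB, blockIncidence_mulVec_sqrt hB0 hB]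

theorem spec_eq (hA0 : ∀ j, 0 < A j) (hB0 : ∀ j, 0 < B j)
    (hA : ∑ k, A k = r) (hB : ∑ k, B k = r) :
    spec (fuzzyBip p r s A) = spec (fuzzyBip p r s B) := by
  obtain ⟨P, Q, hP, hQ, hPAB, hP1⟩ := exists_orthogonal_intertwining hA0 hB0 hA hB
  set O : Matrix (Fin p ⊕ Fin r ⊕ Fin s) (Fin p ⊕ Fin r ⊕ Fin s) ℝ :=
    fromBlocks 1 0 0 (fromBlocks P 0 0 Q)
  have hO : Oᵀ * O = 1 := by
    simp [O, fromBlocks_transpose, fromBlocks_multiply, hP, hQ]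
  have h1P : 1 ᵥ* P = 1 :=
    calc 1 ᵥ* P = Pᵀ *ᵥ (P *ᵥ 1) := by rw [hP1, mulVec_transpose]
      _ = 1 := by rw [mulVec_mulVec, hP, one_mulVec]
  refine spec_eq_of_mul_eq_mul hO ?_
  rw [stdLap_fuzzyBip hA, stdLap_fuzzyBip hB]
  refine fromBlocks_mul_lapBlocks ?_ ?_ ?_ ?_
  · rw [vecMulVec_mul, h1P]
  · rw [transpose_vecMulVec, mul_vecMulVec, hP1]
  · rw [Matrix.mul_smul, Matrix.smul_mul, hPAB]
  · rw [transpose_smul, transpose_smul, Matrix.mul_smul, Matrix.smul_mul,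
      mul_transpose_eq_of_mul_eq hP hQ hPAB]

end FuzzyBip

theorem stmt_14_general (p r s : ℕ)
    (A B : Fin s → ℕ)
    (hA1 : ∀ j, 1 ≤ A j) (hB1 : ∀ j, 1 ≤ B j)
    (hAr : ∑ j, A j = r) (hBr : ∑ j, B j = r)
    (hAB : (Finset.univ.val.map A : Multiset ℕ) ≠ Finset.univ.val.map B) :
    spec (fuzzyBip p r s A) = spec (fuzzyBip p r s B) ∧
    IsEmpty (fuzzyBip p r s A ≃g fuzzyBip p r s B) :=
  ⟨FuzzyBip.spec_eq hA1 hB1 hAr hBr, FuzzyBip.isEmpty_iso hAr hBr hAB⟩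

/-- fuzzy complete bipartite graphs over two `s`-partitions of
`r` which differ as multisets are isospectral for the standard Laplacian and
non-isomorphic. -/
theorem stmt_14 (p r s : ℕ) (hp : 1 ≤ p) (hr : 4 ≤ r) (hs : 2 ≤ s) (hsr : s ≤ r - 1)
    (A B : Fin s → ℕ)
    (hA1 : ∀ j, 1 ≤ A j) (hB1 : ∀ j, 1 ≤ B j)
    (hAr : ∑ j, A j = r) (hBr : ∑ j, B j = r)
    (hAB : (Finset.univ.val.map A : Multiset ℕ) ≠ Finset.univ.val.map B) :
    spec (fuzzyBip p r s A) = spec (fuzzyBip p r s B) ∧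
    IsEmpty (fuzzyBip p r s A ≃g fuzzyBip p r s B) :=
  stmt_14_general p r s A B hA1 hB1 hAr hBr hAB
end
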